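/- arXiv:1508.06703 — 4 statements merged into one kernel-verified Lean document; each statement's English description precedes it below -/
import Mathlib

section
/- Let k₀ ∈ ℝ^d satisfy 2k₀ ∈ 2π ℤ^d. Let λ ∈ ℝ, k ∈ ℝ^d, and let φ : ℝ^d → ℂ be a smooth ℤ^d-periodic function satisfying L(k₀ + k)φ = λφ pointwise. Then the function ψ(x) := e^{−2 i k₀ · x} \overline{φ(x)} is smooth, ℤ^d-periodic, and satisfies L(k₀ − k)ψ = λψ pointwise. In particular, λ admits a nonzero smooth ℤ^d-periodic solution of L(k₀ + k)u = λu if and only if it admits one for L(k₀ − k). -/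
/-- `ℤ^d`-periodicity of a function on `ℝ^d`. -/
def ZPeriodic {d : ℕ} {α : Type*} (f : (Fin d → ℝ) → α) : Prop :=
  ∀ (x : Fin d → ℝ) (γ : Fin d → ℤ), f (x + fun i => (γ i : ℝ)) = f x

/-- The shifted derivative `(D_j + k_j) w = -i ∂_j w + k_j w`. -/
noncomputable def shiftD {d : ℕ} (j : Fin d) (kj : ℝ) (w : (Fin d → ℝ) → ℂ) :
    (Fin d → ℝ) → ℂ :=
  fun x => -Complex.I * fderiv ℝ w x (Pi.single j 1) + (kj : ℂ) * w x

/-- The fiber operator `L(k)u = ∑_{j,l} (D_j + k_j)(a_{jl} (D_l + k_l) u) + V u`. -/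
noncomputable def LOp {d : ℕ} (a : Fin d → Fin d → (Fin d → ℝ) → ℝ)
    (V : (Fin d → ℝ) → ℝ) (k : Fin d → ℝ) (u : (Fin d → ℝ) → ℂ) : (Fin d → ℝ) → ℂ :=
  fun x =>
    (∑ j, ∑ l, shiftD j (k j) (fun y => (a j l y : ℂ) * shiftD l (k l) u y) x)
      + (V x : ℂ) * u x

noncomputable def cLin {d : ℕ} (k₀ : Fin d → ℝ) : (Fin d → ℝ) →L[ℝ] ℂ :=
  ∑ i, (ContinuousLinearMap.proj i).smulRight (-2 * Complex.I * (k₀ i))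

noncomputable def Efun {d : ℕ} (k₀ : Fin d → ℝ) : (Fin d → ℝ) → ℂ :=
  fun x => Complex.exp (-2 * Complex.I * ∑ i, (k₀ i : ℂ) * (x i : ℂ))

lemma cLin_apply {d : ℕ} (k₀ : Fin d → ℝ) (x : Fin d → ℝ) :
    cLin k₀ x = -2 * Complex.I * ∑ i, (k₀ i : ℂ) * (x i : ℂ) := by
  simp only [cLin, ContinuousLinearMap.sum_apply, ContinuousLinearMap.smulRight_apply,
    ContinuousLinearMap.proj_apply, Finset.mul_sum]
  refine Finset.sum_congr rfl fun i _ => ?_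
  simp [Complex.real_smul]
  ring

lemma cLin_single {d : ℕ} (k₀ : Fin d → ℝ) (j : Fin d) :
    cLin k₀ (Pi.single j 1) = -2 * Complex.I * (k₀ j : ℂ) := by
  rw [cLin_apply]
  rw [Finset.sum_eq_single j]
  · simp
  · intro i _ hij; simp [Pi.single_eq_of_ne hij]
  · simp

lemma hasFDerivAt_Efun {d : ℕ} (k₀ : Fin d → ℝ) (x : Fin d → ℝ) :
    HasFDerivAt (Efun k₀) (Efun k₀ x • cLin k₀) x := by
  have h : Efun k₀ = fun x => Complex.exp (cLin k₀ x) := by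
    funext y; rw [Efun, cLin_apply]
  rw [h]
  have := ((cLin k₀).hasFDerivAt (x := x)).cexp
  simpa only [cLin_apply] using this

lemma Efun_smooth {d : ℕ} (k₀ : Fin d → ℝ) : ContDiff ℝ (⊤ : ℕ∞) (Efun k₀) := by
  have h : Efun k₀ = fun x => Complex.exp (cLin k₀ x) := by
    funext y; rw [Efun, cLin_apply]
  rw [h]
  exact Complex.contDiff_exp.comp (cLin k₀).contDiff

lemma conj_smooth {d : ℕ} {g : (Fin d → ℝ) → ℂ} (hg : ContDiff ℝ (⊤ : ℕ∞) g) :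
    ContDiff ℝ (⊤ : ℕ∞) (fun y => (starRingEnd ℂ) (g y)) := by
  exact Complex.conjCLE.toContinuousLinearMap.contDiff.comp hg

lemma fderiv_conj {d : ℕ} {g : (Fin d → ℝ) → ℂ} {x : Fin d → ℝ}
    (hg : DifferentiableAt ℝ g x) (v : Fin d → ℝ) :
    fderiv ℝ (fun y => (starRingEnd ℂ) (g y)) x v = (starRingEnd ℂ) (fderiv ℝ g x v) := by
  have h := (Complex.conjCLE.toContinuousLinearMap.hasFDerivAt (x := g x)).comp x hg.hasFDerivAt
  have h2 : (fun y => (starRingEnd ℂ) (g y)) = ⇑(Complex.conjCLE.toContinuousLinearMap) ∘ g := by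
    funext y; simp
  rw [h2, h.fderiv]
  simp

lemma diff_conj {d : ℕ} {g : (Fin d → ℝ) → ℂ} {x : Fin d → ℝ}
    (hg : DifferentiableAt ℝ g x) :
    DifferentiableAt ℝ (fun y => (starRingEnd ℂ) (g y)) x :=
  (Complex.conjCLE.toContinuousLinearMap.differentiableAt).comp x hg

lemma shiftD_smooth {d : ℕ} (j : Fin d) (κ : ℝ) {w : (Fin d → ℝ) → ℂ}
    (hw : ContDiff ℝ (⊤ : ℕ∞) w) : ContDiff ℝ (⊤ : ℕ∞) (shiftD j κ w) := by
  have h1 : ContDiff ℝ (⊤ : ℕ∞) (fun x => fderiv ℝ w x (Pi.single j 1)) :=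
    (ContinuousLinearMap.apply ℝ ℂ (Pi.single j 1 : Fin d → ℝ)).contDiff.comp
      (hw.fderiv_right (by simp))
  exact (contDiff_const.mul h1).add (contDiff_const.mul hw)

lemma shiftD_neg {d : ℕ} (j : Fin d) (κ : ℝ) (w : (Fin d → ℝ) → ℂ) (x : Fin d → ℝ) :
    shiftD j κ (fun y => -(w y)) x = -(shiftD j κ w x) := by
  simp only [shiftD, fderiv_neg]
  simp
  ring

lemma shift_key {d : ℕ} (k₀ : Fin d → ℝ) (j : Fin d) (κ : ℝ) (g : (Fin d → ℝ) → ℂ)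
    (x : Fin d → ℝ) (hg : DifferentiableAt ℝ g x) :
    shiftD j (k₀ j - κ) (fun y => Efun k₀ y * (starRingEnd ℂ) (g y)) x
      = -(Efun k₀ x) * (starRingEnd ℂ) (shiftD j (k₀ j + κ) g x) := by
  have hE : DifferentiableAt ℝ (Efun k₀) x := (hasFDerivAt_Efun k₀ x).differentiableAt
  have hcg : DifferentiableAt ℝ (fun y => (starRingEnd ℂ) (g y)) x := diff_conj hg
  simp only [shiftD]
  rw [fderiv_fun_mul hE hcg]
  have hEfd : fderiv ℝ (Efun k₀) x = Efun k₀ x • cLin k₀ := (hasFDerivAt_Efun k₀ x).fderiv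
  simp only [ContinuousLinearMap.add_apply, ContinuousLinearMap.smul_apply, hEfd,
    fderiv_conj hg, cLin_single, smul_eq_mul]
  simp only [map_add, map_mul, map_neg, Complex.conj_I, Complex.conj_ofReal,
    Complex.ofReal_sub, Complex.ofReal_add]
  linear_combination (2 * (k₀ j : ℂ) * Efun k₀ x * (starRingEnd ℂ) (g x)) * Complex.I_sq

lemma main_key {d : ℕ} (a : Fin d → Fin d → (Fin d → ℝ) → ℝ) (V : (Fin d → ℝ) → ℝ)
    (ha_smooth : ∀ j l, ContDiff ℝ (⊤ : ℕ∞) (a j l)) (k₀ : Fin d → ℝ) (lam : ℝ) (k : Fin d → ℝ)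
    (φ : (Fin d → ℝ) → ℂ) (hφ_smooth : ContDiff ℝ (⊤ : ℕ∞) φ)
    (hφ_eq : ∀ x, LOp a V (k₀ + k) φ x = (lam : ℂ) * φ x) (x : Fin d → ℝ) :
    LOp a V (k₀ - k) (fun y => Efun k₀ y * (starRingEnd ℂ) (φ y)) x
      = (lam : ℂ) * (Efun k₀ x * (starRingEnd ℂ) (φ x)) := by
  have hφd : Differentiable ℝ φ := hφ_smooth.differentiable (by simp)
  have hsum : ∀ j l : Fin d,
      shiftD j ((k₀ - k) j)
        (fun y => (a j l y : ℂ) * shiftD l ((k₀ - k) l) (fun z => Efun k₀ z * (starRingEnd ℂ) (φ z)) y) x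
      = Efun k₀ x * (starRingEnd ℂ)
          (shiftD j ((k₀ + k) j) (fun y => (a j l y : ℂ) * shiftD l ((k₀ + k) l) φ y) x) := by
    intro j l
    have hg : ContDiff ℝ (⊤ : ℕ∞) (fun y => ((a j l y : ℂ)) * shiftD l ((k₀ + k) l) φ y) :=
      ((Complex.ofRealCLM.contDiff.comp (ha_smooth j l))).mul
        (shiftD_smooth l ((k₀ + k) l) hφ_smooth)
    have hfun : (fun y => (a j l y : ℂ) *
          shiftD l ((k₀ - k) l) (fun z => Efun k₀ z * (starRingEnd ℂ) (φ z)) y)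
        = fun y => -(Efun k₀ y *
            (starRingEnd ℂ) ((a j l y : ℂ) * shiftD l ((k₀ + k) l) φ y)) := by
      funext y
      have := shift_key k₀ l (k l) φ y (hφd y)
      rw [show (k₀ - k) l = k₀ l - k l from rfl, this, show (k₀ + k) l = k₀ l + k l from rfl]
      simp only [map_mul, Complex.conj_ofReal]
      ring
    rw [hfun]
    have hneg := shiftD_neg j ((k₀ - k) j)
      (fun y => Efun k₀ y * (starRingEnd ℂ) ((a j l y : ℂ) * shiftD l ((k₀ + k) l) φ y)) x
    rw [hneg, show (k₀ - k) j = k₀ j - k j from rfl,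
      shift_key k₀ j (k j) _ x (hg.differentiable (by simp) x),
      show (k₀ + k) j = k₀ j + k j from rfl]
    ring
  simp only [LOp]
  rw [Finset.sum_congr rfl fun j _ => Finset.sum_congr rfl fun l _ => hsum j l]
  have : (∑ j, ∑ l, Efun k₀ x * (starRingEnd ℂ)
      (shiftD j ((k₀ + k) j) (fun y => (a j l y : ℂ) * shiftD l ((k₀ + k) l) φ y) x))
      = Efun k₀ x * (starRingEnd ℂ)
        (∑ j, ∑ l, shiftD j ((k₀ + k) j) (fun y => (a j l y : ℂ) * shiftD l ((k₀ + k) l) φ y) x) := by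
    simp [Finset.mul_sum, map_sum]
  rw [this]
  have hL := hφ_eq x
  simp only [LOp] at hL
  have : Efun k₀ x * (starRingEnd ℂ)
        (∑ j, ∑ l, shiftD j ((k₀ + k) j) (fun y => (a j l y : ℂ) * shiftD l ((k₀ + k) l) φ y) x)
      + (V x : ℂ) * (Efun k₀ x * (starRingEnd ℂ) (φ x))
      = Efun k₀ x * (starRingEnd ℂ)
        ((∑ j, ∑ l, shiftD j ((k₀ + k) j) (fun y => (a j l y : ℂ) * shiftD l ((k₀ + k) l) φ y) x)
          + (V x : ℂ) * φ x) := by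
    simp only [map_add, map_mul, Complex.conj_ofReal]
    ring
  rw [this, hL]
  simp only [map_mul, Complex.conj_ofReal]
  ring


lemma Efun_periodic {d : ℕ} (k₀ : Fin d → ℝ)
    (hk₀ : ∃ m : Fin d → ℤ, ∀ i, 2 * k₀ i = 2 * Real.pi * m i) :
    ZPeriodic (Efun k₀) := by
  obtain ⟨m, hm⟩ := hk₀
  intro x γ
  simp only [Efun, Pi.add_apply]
  have hk : ∀ i, (k₀ i : ℂ) = (Real.pi : ℂ) * ((m i : ℤ) : ℂ) := by
    intro i
    have h := hm i
    have h2 : k₀ i = Real.pi * (m i : ℤ) := by push_cast at h ⊢; linarith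
    rw [h2]; push_cast; ring
  have hsum : (∑ i, (k₀ i : ℂ) * (((x i + ((γ i : ℤ) : ℝ)) : ℝ) : ℂ))
      = (∑ i, (k₀ i : ℂ) * ((x i : ℝ) : ℂ))
        + (Real.pi : ℂ) * (((∑ i, m i * γ i : ℤ) : ℤ) : ℂ) := by
    push_cast
    rw [Finset.mul_sum, ← Finset.sum_add_distrib]
    refine Finset.sum_congr rfl fun i _ => ?_
    rw [hk i]; push_cast; ring
  rw [hsum, mul_add, Complex.exp_add]
  have h1 : Complex.exp (-2 * Complex.I *
      ((Real.pi : ℂ) * (((∑ i, m i * γ i : ℤ) : ℤ) : ℂ))) = 1 := by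
    rw [show -2 * Complex.I * ((Real.pi : ℂ) * (((∑ i, m i * γ i : ℤ) : ℤ) : ℂ))
        = ((-(∑ i, m i * γ i) : ℤ) : ℂ) * (2 * (Real.pi : ℂ) * Complex.I) by push_cast; ring]
    exact Complex.exp_int_mul_two_pi_mul_I _
  rw [h1, mul_one]

lemma psi_smooth {d : ℕ} (k₀ : Fin d → ℝ) {φ : (Fin d → ℝ) → ℂ} (hφ : ContDiff ℝ (⊤ : ℕ∞) φ) :
    ContDiff ℝ (⊤ : ℕ∞) (fun x => Efun k₀ x * (starRingEnd ℂ) (φ x)) :=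
  (Efun_smooth k₀).mul (conj_smooth hφ)

lemma psi_ne_zero {d : ℕ} (k₀ : Fin d → ℝ) {φ : (Fin d → ℝ) → ℂ} (hφ : φ ≠ 0) :
    (fun x => Efun k₀ x * (starRingEnd ℂ) (φ x)) ≠ 0 := by
  intro h
  apply hφ
  funext x
  have hx := congrFun h x
  simp only [Pi.zero_apply, mul_eq_zero] at hx
  rcases hx with hx | hx
  · exact absurd hx (Complex.exp_ne_zero _)
  · simpa using hx

lemma psi_periodic {d : ℕ} (k₀ : Fin d → ℝ)
    (hk₀ : ∃ m : Fin d → ℤ, ∀ i, 2 * k₀ i = 2 * Real.pi * m i)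
    {φ : (Fin d → ℝ) → ℂ} (hφ : ZPeriodic φ) :
    ZPeriodic (fun x => Efun k₀ x * (starRingEnd ℂ) (φ x)) := by
  intro x γ
  simp only
  rw [Efun_periodic k₀ hk₀ x γ, hφ x γ]

lemma main_pack {d : ℕ} (a : Fin d → Fin d → (Fin d → ℝ) → ℝ) (V : (Fin d → ℝ) → ℝ)
    (ha_smooth : ∀ j l, ContDiff ℝ (⊤ : ℕ∞) (a j l)) (k₀ : Fin d → ℝ)
    (hk₀ : ∃ m : Fin d → ℤ, ∀ i, 2 * k₀ i = 2 * Real.pi * m i)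
    (lam : ℝ) (k : Fin d → ℝ)
    (hex : ∃ u : (Fin d → ℝ) → ℂ, u ≠ 0 ∧ ContDiff ℝ (⊤ : ℕ∞) u ∧ ZPeriodic u ∧
        ∀ x, LOp a V (k₀ + k) u x = (lam : ℂ) * u x) :
    ∃ u : (Fin d → ℝ) → ℂ, u ≠ 0 ∧ ContDiff ℝ (⊤ : ℕ∞) u ∧ ZPeriodic u ∧
        ∀ x, LOp a V (k₀ - k) u x = (lam : ℂ) * u x := by
  obtain ⟨u, hu0, husm, huper, hueq⟩ := hex
  exact ⟨fun x => Efun k₀ x * (starRingEnd ℂ) (u x), psi_ne_zero k₀ hu0,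
    psi_smooth k₀ husm, psi_periodic k₀ hk₀ huper,
    main_key a V ha_smooth k₀ lam k u husm hueq⟩

/-- if `2k₀ ∈ 2πℤ^d` and `L(k₀+k)φ = λφ` with `φ` smooth `ℤ^d`-periodic, then
`ψ(x) = e^{-2ik₀·x} φ̄(x)` is smooth, periodic and satisfies `L(k₀-k)ψ = λψ`; in particular
`L(k₀+k)u = λu` has a nonzero smooth periodic solution iff `L(k₀-k)u = λu` does. -/
theorem stmt_6 {d : ℕ} (hd : 1 ≤ d)
    (a : Fin d → Fin d → (Fin d → ℝ) → ℝ) (V : (Fin d → ℝ) → ℝ)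
    (ha_symm : ∀ j l, a j l = a l j)
    (ha_smooth : ∀ j l, ContDiff ℝ (⊤ : ℕ∞) (a j l)) (hV_smooth : ContDiff ℝ (⊤ : ℕ∞) V)
    (ha_per : ∀ j l, ZPeriodic (a j l)) (hV_per : ZPeriodic V)
    (k₀ : Fin d → ℝ) (hk₀ : ∃ m : Fin d → ℤ, ∀ i, 2 * k₀ i = 2 * Real.pi * m i)
    (lam : ℝ) (k : Fin d → ℝ) (φ : (Fin d → ℝ) → ℂ)
    (hφ_smooth : ContDiff ℝ (⊤ : ℕ∞) φ) (hφ_per : ZPeriodic φ)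
    (hφ_eq : ∀ x, LOp a V (k₀ + k) φ x = (lam : ℂ) * φ x) :
    (ContDiff ℝ (⊤ : ℕ∞) (fun x : Fin d → ℝ =>
        Complex.exp (-2 * Complex.I * ∑ i, (k₀ i : ℂ) * (x i : ℂ)) * starRingEnd ℂ (φ x)) ∧
      ZPeriodic (fun x : Fin d → ℝ =>
        Complex.exp (-2 * Complex.I * ∑ i, (k₀ i : ℂ) * (x i : ℂ)) * starRingEnd ℂ (φ x)) ∧
      ∀ x, LOp a V (k₀ - k)
          (fun y : Fin d → ℝ =>
            Complex.exp (-2 * Complex.I * ∑ i, (k₀ i : ℂ) * (y i : ℂ)) * starRingEnd ℂ (φ y)) x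
        = (lam : ℂ) *
          (Complex.exp (-2 * Complex.I * ∑ i, (k₀ i : ℂ) * (x i : ℂ)) * starRingEnd ℂ (φ x))) ∧
    ((∃ u : (Fin d → ℝ) → ℂ, u ≠ 0 ∧ ContDiff ℝ (⊤ : ℕ∞) u ∧ ZPeriodic u ∧
        ∀ x, LOp a V (k₀ + k) u x = (lam : ℂ) * u x) ↔
      (∃ u : (Fin d → ℝ) → ℂ, u ≠ 0 ∧ ContDiff ℝ (⊤ : ℕ∞) u ∧ ZPeriodic u ∧
        ∀ x, LOp a V (k₀ - k) u x = (lam : ℂ) * u x)) := by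
  
  have hψ := main_key a V ha_smooth k₀ lam k φ hφ_smooth hφ_eq
  refine ⟨⟨psi_smooth k₀ hφ_smooth, psi_periodic k₀ hk₀ hφ_per, hψ⟩, ?_⟩
  constructor
  · exact fun h => main_pack a V ha_smooth k₀ hk₀ lam k h
  · intro h
    have h' : ∃ u : (Fin d → ℝ) → ℂ, u ≠ 0 ∧ ContDiff ℝ (⊤ : ℕ∞) u ∧ ZPeriodic u ∧
        ∀ x, LOp a V (k₀ + (-k)) u x = (lam : ℂ) * u x := by
      rwa [← sub_eq_add_neg]
    have := main_pack a V ha_smooth k₀ hk₀ lam (-k) h'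
    rwa [sub_neg_eq_add] at this
end

section
/- For every α ∈ (0,1) and every n > 0, as x₀ → +∞, ∫_{x₀^α}^{x₀/2} (1 − t/x₀)^{−(d−1)/2} ∫_{|x'| < ε (x₀−t)^{1/2}} | exp( −½ x'·Q x' + E(x', x₀ − t) ) | · | ν( t, x'/(x₀−t)^{1/2} ) | dx' dt = O(x₀^{−n}). -/
open Metric MeasureTheory Filter Asymptotics
open scoped Topology

/-! On the range `x₀^α < t ≤ x₀/2` everything is crude except the decay of `ν`: the factor
`|exp(…)|` is at most `1` because the real part of its exponent is at most `-(γ/4)|x'|² ≤ 0`,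
the prefactor is at most `2^((d-1)/2)` because `t ≤ x₀/2`, the ball has volume
`O((ε√x₀)^(d-1))` and the `t`-range has length at most `x₀`. Rapid decay of `ν` in `t ≥ x₀^α`
gives `|ν| ≤ C x₀^(-αN)` for every `N`, and `N = (n + d)/α` absorbs all the polynomial losses. -/

lemma Complex.norm_exp_le_one_of_re_nonpos {z : ℂ} (hz : z.re ≤ 0) : ‖Complex.exp z‖ ≤ 1 := by
  rw [Complex.norm_exp]
  exact Real.exp_le_one_iff.2 hz

lemma re_neg_half_quadratic_add {ι : Type*} [Fintype ι] (Q : Matrix ι ι ℝ) (v : ι → ℝ) (w : ℂ) :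
    (-(1 / 2 : ℂ) * (∑ p, ∑ q, (Q p q : ℂ) * v p * v q) + w).re =
      -(1 / 2) * (∑ p, ∑ q, Q p q * v p * v q) + w.re := by
  have : -(1 / 2 : ℂ) * (∑ p, ∑ q, (Q p q : ℂ) * v p * v q) =
      ((-(1 / 2) * (∑ p, ∑ q, Q p q * v p * v q) : ℝ) : ℂ) := by
    push_cast; ring
  rw [Complex.add_re, this, Complex.ofReal_re]

lemma Real.rpow_neg_le_two_rpow_of_half_le {s k : ℝ} (hs : 1 / 2 ≤ s) (hk : 0 ≤ k) :
    s ^ (-k) ≤ 2 ^ k :=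
  calc s ^ (-k) ≤ (1 / 2 : ℝ) ^ (-k) :=
        Real.rpow_le_rpow_of_nonpos (by norm_num) hs (neg_nonpos.2 hk)
    _ = 2 ^ k := by
        rw [one_div, Real.inv_rpow zero_le_two, Real.rpow_neg zero_le_two, inv_inv]

lemma norm_exp_neg_half_quadratic_add_le_one {ι : Type*} [Fintype ι] (Q : Matrix ι ι ℝ)
    (v : ι → ℝ) (w : ℂ) {γ r : ℝ} (hγ : 0 ≤ γ)
    (h : -(1 / 2) * (∑ p, ∑ q, Q p q * v p * v q) + w.re ≤ -(γ / 4) * r ^ 2) :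
    ‖Complex.exp (-(1 / 2 : ℂ) * (∑ p, ∑ q, (Q p q : ℂ) * v p * v q) + w)‖ ≤ 1 := by
  refine Complex.norm_exp_le_one_of_re_nonpos ?_
  rw [re_neg_half_quadratic_add]
  nlinarith [sq_nonneg r]

lemma le_max_mul_rpow_of_le_one_add_abs_rpow {y C N x α t : ℝ}
    (hy : y ≤ C * (1 + |t|) ^ (-N)) (hx : 0 < x) (hxt : x ^ α ≤ t) (hN : 0 ≤ N) :
    y ≤ max C 0 * x ^ (-(α * N)) :=
  calc y ≤ C * (1 + |t|) ^ (-N) := hy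
    _ ≤ max C 0 * (x ^ α) ^ (-N) :=
        mul_le_mul (le_max_left _ _)
          (Real.rpow_le_rpow_of_nonpos (by positivity) (by linarith [le_abs_self t])
            (neg_nonpos.2 hN))
          (by positivity) (le_max_right _ _)
    _ = max C 0 * x ^ (-(α * N)) := by rw [← Real.rpow_mul hx.le, mul_neg]

lemma norm_inv_smul_le_of_norm_lt_mul {E : Type*} [NormedAddCommGroup E] [NormedSpace ℝ E]
    {v : E} {c ε : ℝ} (hc : 0 < c) (hv : ‖v‖ < ε * c) : ‖c⁻¹ • v‖ ≤ ε := by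
  rw [norm_smul, norm_inv, Real.norm_of_nonneg hc.le, inv_mul_le_iff₀ hc]
  linarith

lemma rpow_neg_mul_sqrt_pow_mul_le {x ε p : ℝ} (hx : 1 ≤ x) (hε : 0 ≤ ε) (k : ℕ) :
    x ^ (-(p + k + 1)) * (ε * √x) ^ k * x ≤ ε ^ k * x ^ (-p) := by
  have hx0 : 0 < x := zero_lt_one.trans_le hx
  calc x ^ (-(p + k + 1)) * (ε * √x) ^ k * x ≤ x ^ (-(p + k + 1)) * (ε * x) ^ k * x := by
        gcongr
        exact Real.sqrt_le_self_iff.2 (Or.inr hx)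
    _ = ε ^ k * (x ^ (-(p + k + 1)) * x ^ (k : ℝ) * x ^ (1 : ℝ)) := by
        rw [Real.rpow_natCast, Real.rpow_one]; ring
    _ = ε ^ k * x ^ (-p) := by
        rw [← Real.rpow_add hx0, ← Real.rpow_add hx0]; ring_nf

section HaarBounds

variable {E : Type*} [NormedAddCommGroup E] [InnerProductSpace ℝ E] [FiniteDimensional ℝ E]
  [MeasurableSpace E] [BorelSpace E] {μ : Measure E} [μ.IsAddHaarMeasure]

lemma norm_setIntegral_ball_le {F : Type*} [NormedAddCommGroup F] [NormedSpace ℝ F]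
    {f : E → F} {r M : ℝ} (hr : 0 < r) (hf : ∀ y ∈ ball (0 : E) r, ‖f y‖ ≤ M) :
    ‖∫ y in ball (0 : E) r, f y ∂μ‖ ≤ M * μ.real (ball (0 : E) 1) * r ^ Module.finrank ℝ E := by
  have hM : 0 ≤ M := (norm_nonneg _).trans (hf 0 (mem_ball_self hr))
  calc ‖∫ y in ball (0 : E) r, f y ∂μ‖ ≤ M * μ.real (ball (0 : E) r) :=
        norm_setIntegral_le_of_norm_le_const measure_ball_lt_top hf
    _ = M * μ.real (ball (0 : E) 1) * r ^ Module.finrank ℝ E := by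
        rw [measureReal_def, measureReal_def, Measure.addHaar_ball_of_pos μ 0 hr, ENNReal.toReal_mul,
          ENNReal.toReal_ofReal (by positivity)]
        ring

lemma norm_setIntegral_Ioc_ball_le (g : ℝ → E → ℝ) {x a ε s M : ℝ} (hx : 0 < x) (ha : 0 ≤ a)
    (hε : 0 < ε) (hs : 0 ≤ s) (hM : 0 ≤ M)
    (hg : ∀ t ∈ Set.Ioc a (x / 2), ∀ y ∈ ball (0 : E) (ε * √(x - t)), ‖g t y‖ ≤ M) :
    ‖∫ t in Set.Ioc a (x / 2), (1 - t / x) ^ (-s) * ∫ y in ball (0 : E) (ε * √(x - t)), g t y ∂μ‖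
      ≤ 2 ^ s * M * μ.real (ball (0 : E) 1) * (ε * √x) ^ Module.finrank ℝ E * x := by
  set B := 2 ^ s * (M * μ.real (ball (0 : E) 1) * (ε * √x) ^ Module.finrank ℝ E)
  have hB : 0 ≤ B := by positivity
  have hslice : ∀ t ∈ Set.Ioc a (x / 2),
      ‖(1 - t / x) ^ (-s) * ∫ y in ball (0 : E) (ε * √(x - t)), g t y ∂μ‖ ≤ B := by
    rintro t ⟨hat, htx⟩
    have hhalf : 1 / 2 ≤ 1 - t / x := by
      rw [le_sub_comm, div_le_iff₀ hx]; linarith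
    have hxt : 0 < x - t := by linarith
    rw [norm_mul, Real.norm_of_nonneg (Real.rpow_nonneg (by linarith) _)]
    refine mul_le_mul (Real.rpow_neg_le_two_rpow_of_half_le hhalf hs) ?_ (norm_nonneg _)
      (by positivity)
    refine (norm_setIntegral_ball_le (by positivity) (hg t ⟨hat, htx⟩)).trans ?_
    gcongr
    linarith
  calc _ ≤ B * volume.real (Set.Ioc a (x / 2)) :=
        norm_setIntegral_le_of_norm_le_const measure_Ioc_lt_top hslice
    _ ≤ B * x := by
        gcongr
        rw [Real.volume_real_Ioc]
        exact max_le (by linarith) hx.le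
    _ = _ := by ring

end HaarBounds

theorem stmt_13_general (d : ℕ) (hd : 2 ≤ d) (ε γ : ℝ) (hε : 0 < ε) (hγ : 0 < γ)
    (Q : Matrix (Fin (d - 1)) (Fin (d - 1)) ℝ)
    (ν : ℝ × EuclideanSpace ℝ (Fin (d - 1)) → ℂ)
    (hνdecay : ∀ N : ℝ, 0 < N → ∃ C : ℝ, ∀ (t : ℝ) (ξ : EuclideanSpace ℝ (Fin (d - 1))),
      ‖ξ‖ ≤ ε → ‖ν (t, ξ)‖ ≤ C * (1 + |t|) ^ (-N))
    (Efun : EuclideanSpace ℝ (Fin (d - 1)) → ℝ → ℂ)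
    (hE : ∀ τ : ℝ, 0 < τ → ∀ x' : EuclideanSpace ℝ (Fin (d - 1)),
      ‖x'‖ < ε * Real.sqrt τ →
      -(1 / 2) * (∑ p, ∑ q, Q p q * x' p * x' q) + (Efun x' τ).re ≤ -(γ / 4) * ‖x'‖ ^ 2)
    (α n : ℝ) (hα0 : 0 < α) (hn : 0 < n) :
    (fun x₀ : ℝ =>
      ∫ t in Set.Ioc (x₀ ^ α) (x₀ / 2),
        (1 - t / x₀) ^ (-((d : ℝ) - 1) / 2) *
          ∫ x' in ball (0 : EuclideanSpace ℝ (Fin (d - 1))) (ε * Real.sqrt (x₀ - t)),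
            ‖Complex.exp (-(1 / 2 : ℂ) * (∑ p, ∑ q, (Q p q : ℂ) * x' p * x' q) +
                Efun x' (x₀ - t))‖ *
              ‖ν (t, (Real.sqrt (x₀ - t))⁻¹ • x')‖)
      =O[atTop] fun x₀ : ℝ => x₀ ^ (-n) := by
  set N := (n + (d - 1 : ℕ) + 1) / α
  have hαN : α * N = n + (d - 1 : ℕ) + 1 := mul_div_cancel₀ _ hα0.ne'
  obtain ⟨C, hC⟩ := hνdecay N (by positivity)
  have hs : 0 ≤ ((d : ℝ) - 1) / 2 := by
    have : (2 : ℝ) ≤ d := by exact_mod_cast hd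
    linarith
  refine IsBigO.of_bound (2 ^ (((d : ℝ) - 1) / 2) * max C 0 *
    volume.real (ball (0 : EuclideanSpace ℝ (Fin (d - 1))) 1) * ε ^ (d - 1)) ?_
  filter_upwards [eventually_ge_atTop 1] with x hx
  have hx0 : 0 < x := zero_lt_one.trans_le hx
  have hintegrand : ∀ t ∈ Set.Ioc (x ^ α) (x / 2),
      ∀ x' ∈ ball (0 : EuclideanSpace ℝ (Fin (d - 1))) (ε * √(x - t)),
      ‖‖Complex.exp (-(1 / 2 : ℂ) * (∑ p, ∑ q, (Q p q : ℂ) * x' p * x' q) + Efun x' (x - t))‖ *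
        ‖ν (t, (√(x - t))⁻¹ • x')‖‖ ≤ max C 0 * x ^ (-(α * N)) := by
    rintro t ⟨hαt, htx⟩ x' hx'
    rw [mem_ball_zero_iff] at hx'
    have hxt : 0 < x - t := by linarith [Real.rpow_nonneg hx0.le α]
    have hexp := norm_exp_neg_half_quadratic_add_le_one Q _ _ hγ.le (hE _ hxt x' hx')
    have hν := le_max_mul_rpow_of_le_one_add_abs_rpow
      (hC t _ (norm_inv_smul_le_of_norm_lt_mul (Real.sqrt_pos.2 hxt) hx')) hx0 hαt.le
      (by positivity)
    rw [norm_mul, norm_norm, norm_norm]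
    exact (mul_le_mul hexp hν (norm_nonneg _) zero_le_one).trans_eq (one_mul _)
  rw [neg_div, Real.norm_of_nonneg (Real.rpow_nonneg hx0.le _)]
  refine (norm_setIntegral_Ioc_ball_le _ hx0 (Real.rpow_nonneg hx0.le α) hε hs (by positivity)
    hintegrand).trans ?_
  rw [finrank_euclideanSpace_fin]
  calc _ = 2 ^ (((d : ℝ) - 1) / 2) * max C 0 *
          volume.real (ball (0 : EuclideanSpace ℝ (Fin (d - 1))) 1) *
          (x ^ (-(n + (d - 1 : ℕ) + 1)) * (ε * √x) ^ (d - 1) * x) := by rw [hαN]; ring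
    _ ≤ _ * (ε ^ (d - 1) * x ^ (-n)) :=
        mul_le_mul_of_nonneg_left (rpow_neg_mul_sqrt_pow_mul_le hx hε.le _) (by positivity)
    _ = _ := by ring

/-- truncation in `t`: for `α ∈ (0,1)` and `n > 0`,
`∫_{x₀^α}^{x₀/2} (1-t/x₀)^{-(d-1)/2} ∫_{|x'|<ε√(x₀-t)} |exp(-½x'·Qx' + E(x',x₀-t))| |ν(t,x'/√(x₀-t))| dx' dt
 = O(x₀^{-n})` as `x₀ → +∞`. -/
theorem stmt_13 (d : ℕ) (hd : 2 ≤ d) (ε γ : ℝ) (hε : 0 < ε) (hγ : 0 < γ)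
    (Q : Matrix (Fin (d - 1)) (Fin (d - 1)) ℝ) (hQsymm : Q.IsSymm) (hQpos : Q.PosDef)
    (hgamQ : ∀ v : EuclideanSpace ℝ (Fin (d - 1)),
      γ * ‖v‖ ^ 2 ≤ ∑ p, ∑ q, Q p q * v p * v q)
    (ν : ℝ × EuclideanSpace ℝ (Fin (d - 1)) → ℂ)
    (hν : ContinuousOn ν {q : ℝ × EuclideanSpace ℝ (Fin (d - 1)) | ‖q.2‖ ≤ ε})
    (hνdecay : ∀ N : ℝ, 0 < N → ∃ C : ℝ, ∀ (t : ℝ) (ξ : EuclideanSpace ℝ (Fin (d - 1))),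
      ‖ξ‖ ≤ ε → ‖ν (t, ξ)‖ ≤ C * (1 + |t|) ^ (-N))
    (Efun : EuclideanSpace ℝ (Fin (d - 1)) → ℝ → ℂ)
    (hE : ∀ τ : ℝ, 0 < τ → ∀ x' : EuclideanSpace ℝ (Fin (d - 1)),
      ‖x'‖ < ε * Real.sqrt τ →
      -(1 / 2) * (∑ p, ∑ q, Q p q * x' p * x' q) + (Efun x' τ).re ≤ -(γ / 4) * ‖x'‖ ^ 2)
    (α n : ℝ) (hα0 : 0 < α) (hα1 : α < 1) (hn : 0 < n) :
    (fun x₀ : ℝ =>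
      ∫ t in Set.Ioc (x₀ ^ α) (x₀ / 2),
        (1 - t / x₀) ^ (-((d : ℝ) - 1) / 2) *
          ∫ x' in ball (0 : EuclideanSpace ℝ (Fin (d - 1))) (ε * Real.sqrt (x₀ - t)),
            ‖Complex.exp (-(1 / 2 : ℂ) * (∑ p, ∑ q, (Q p q : ℂ) * x' p * x' q) +
                Efun x' (x₀ - t))‖ *
              ‖ν (t, (Real.sqrt (x₀ - t))⁻¹ • x')‖)
      =O[atTop] fun x₀ : ℝ => x₀ ^ (-n) :=
  stmt_13_general d hd ε γ hε hγ Q ν hνdecay Efun hE α n hα0 hn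
end

section
/- For every α ∈ (0,1), every β ∈ (0,1/2), and every n > 0, as x₀ → +∞, ∫_{−∞}^{x₀^α} ∫_{x₀^β ≤ |x'| < ε (x₀−t)^{1/2}} | exp( −½ x'·Q x' + E(x', x₀ − t) ) | · | ν( t, x'/(x₀−t)^{1/2} ) | dx' dt = O(x₀^{−n}). -/
/-! On the region `x₀ ^ β ≤ ‖x'‖` the hypothesis on `E` bounds the exponential factor by
`exp (-(γ / 4) ‖x'‖²) ≤ exp (-(γ / 8) x₀ ^ (2β)) · exp (-(γ / 8) ‖x'‖²)`, and the decay of `ν`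
bounds the second factor by `C (1 + |t|)⁻²`. The integrand is thus dominated by a product of
an integrable function of `t` and a Gaussian in `x'`, times `exp (-(γ / 8) x₀ ^ (2β))`, which
is `o(x₀ ^ (-n))` for every `n`. -/

open Metric MeasureTheory Filter Asymptotics

lemma integrable_exp_neg_mul_sq_norm {V : Type*} [NormedAddCommGroup V] [InnerProductSpace ℝ V]
    [FiniteDimensional ℝ V] [MeasurableSpace V] [BorelSpace V] {c : ℝ} (hc : 0 < c) :
    Integrable fun x : V => Real.exp (-c * ‖x‖ ^ 2) := by
  refine (GaussianFourier.integrable_cexp_neg_mul_sq_norm_add (V := V) (b := c)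
    (by simpa using hc) 0 0).norm.congr (.of_forall fun x => ?_)
  simp only [Complex.norm_exp, zero_mul, add_zero, ← Complex.ofReal_pow, ← Complex.ofReal_neg,
    ← Complex.ofReal_mul, Complex.ofReal_re]

lemma exp_neg_mul_sq_le_mul_of_le {b a r : ℝ} (hb : 0 ≤ b) (ha : 0 ≤ a) (har : a ≤ r) :
    Real.exp (-b * r ^ 2) ≤ Real.exp (-(b / 2) * a ^ 2) * Real.exp (-(b / 2) * r ^ 2) := by
  rw [← Real.exp_add, Real.exp_le_exp]
  nlinarith [mul_le_mul_of_nonneg_left (pow_le_pow_left₀ ha har 2) hb]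

lemma exp_neg_mul_rpow_sq_isLittleO {c β : ℝ} (hc : 0 < c) (hβ : 0 < β) (s : ℝ) :
    (fun x : ℝ => Real.exp (-c * (x ^ β) ^ 2)) =o[atTop] fun x => x ^ s := by
  have hβ2 : 2 * β ≠ 0 := by positivity
  refine ((isLittleO_exp_neg_mul_rpow_atTop hc (s / (2 * β))).comp_tendsto
    (tendsto_rpow_atTop (by positivity : 0 < 2 * β))).congr' ?_ ?_
  all_goals
    filter_upwards [eventually_ge_atTop 0] with x hx
    simp only [Function.comp_apply]
  · rw [← Real.rpow_natCast, ← Real.rpow_mul hx, Nat.cast_ofNat, mul_comm β]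
  · rw [← Real.rpow_mul hx, mul_div_cancel₀ _ hβ2]

lemma norm_cexp_neg_half_quadForm_add_le {ι : Type*} [Fintype ι] (Q : Matrix ι ι ℝ)
    (x : EuclideanSpace ℝ ι) (z : ℂ) {b : ℝ}
    (h : -(1 / 2) * (∑ p, ∑ q, Q p q * x p * x q) + z.re ≤ b) :
    ‖Complex.exp (-(1 / 2 : ℂ) * (∑ p, ∑ q, (Q p q : ℂ) * x p * x q) + z)‖ ≤ Real.exp b := by
  have hcast : -(1 / 2 : ℂ) * (∑ p, ∑ q, (Q p q : ℂ) * x p * x q) =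
      ((-(1 / 2) * (∑ p, ∑ q, Q p q * x p * x q) : ℝ) : ℂ) := by
    push_cast; ring
  rw [hcast, Complex.norm_exp, Complex.add_re, Complex.ofReal_re]
  exact Real.exp_le_exp.mpr h

lemma norm_cexp_mul_norm_le_of_le_norm_of_norm_lt {ι : Type*} [Fintype ι] (Q : Matrix ι ι ℝ)
    (E : EuclideanSpace ℝ ι → ℝ → ℂ) (φ : EuclideanSpace ℝ ι → ℂ) {ε b a τ M : ℝ}
    (hb : 0 ≤ b) (ha : 0 ≤ a)
    (hE : 0 < τ → ∀ x : EuclideanSpace ℝ ι, ‖x‖ < ε * Real.sqrt τ →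
      -(1 / 2) * (∑ p, ∑ q, Q p q * x p * x q) + (E x τ).re ≤ -b * ‖x‖ ^ 2)
    (hφ : ∀ ξ : EuclideanSpace ℝ ι, ‖ξ‖ ≤ ε → ‖φ ξ‖ ≤ M)
    {x : EuclideanSpace ℝ ι} (hax : a ≤ ‖x‖) (hxε : ‖x‖ < ε * Real.sqrt τ) :
    ‖Complex.exp (-(1 / 2 : ℂ) * (∑ p, ∑ q, (Q p q : ℂ) * x p * x q) + E x τ)‖ *
        ‖φ ((Real.sqrt τ)⁻¹ • x)‖ ≤
      M * (Real.exp (-(b / 2) * a ^ 2) * Real.exp (-(b / 2) * ‖x‖ ^ 2)) := by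
  have hsqrt : 0 < Real.sqrt τ := by
    refine (Real.sqrt_nonneg _).lt_of_ne fun h => ?_
    rw [← h, mul_zero] at hxε
    exact (norm_nonneg x).not_gt hxε
  have hφ_le : ‖φ ((Real.sqrt τ)⁻¹ • x)‖ ≤ M := by
    refine hφ _ ?_
    rw [norm_smul, norm_inv, Real.norm_of_nonneg hsqrt.le, inv_mul_le_iff₀ hsqrt, mul_comm]
    exact hxε.le
  have hexp_le := (norm_cexp_neg_half_quadForm_add_le Q x _
    (hE (Real.sqrt_pos.mp hsqrt) x hxε)).trans (exp_neg_mul_sq_le_mul_of_le hb ha hax)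
  rw [mul_comm M]
  exact mul_le_mul hexp_le hφ_le (norm_nonneg _) (by positivity)

lemma setIntegral_setIntegral_le_integral_mul_integral {α β : Type*} [MeasurableSpace α]
    [MeasurableSpace β] {μ : Measure α} {ν : Measure β} {s : Set α} {S : α → Set β}
    (hS : ∀ a, MeasurableSet (S a)) {f : α → β → ℝ} {g : α → ℝ} {h : β → ℝ}
    (hf : ∀ a x, 0 ≤ f a x) (hg0 : ∀ a, 0 ≤ g a) (hh0 : ∀ x, 0 ≤ h x)
    (hg : Integrable g μ) (hh : Integrable h ν) (hfgh : ∀ a, ∀ x ∈ S a, f a x ≤ g a * h x) :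
    ∫ a in s, ∫ x in S a, f a x ∂ν ∂μ ≤ (∫ a, g a ∂μ) * ∫ x, h x ∂ν := by
  have hinner : ∀ a, ∫ x in S a, f a x ∂ν ≤ g a * ∫ x, h x ∂ν := fun a =>
    calc ∫ x in S a, f a x ∂ν
        ≤ ∫ x in S a, g a * h x ∂ν :=
          integral_mono_of_nonneg (.of_forall (hf a)) (hh.const_mul _).restrict
            (ae_restrict_of_forall_mem (hS a) (hfgh a))
      _ ≤ ∫ x, g a * h x ∂ν :=
          setIntegral_le_integral (hh.const_mul _) (.of_forall fun x => mul_nonneg (hg0 a) (hh0 x))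
      _ = g a * ∫ x, h x ∂ν := integral_const_mul _ _
  calc ∫ a in s, ∫ x in S a, f a x ∂ν ∂μ
      ≤ ∫ a in s, g a * ∫ x, h x ∂ν ∂μ :=
        integral_mono_of_nonneg (.of_forall fun a => integral_nonneg (hf a))
          (hg.mul_const _).restrict (.of_forall hinner)
    _ ≤ ∫ a, g a * ∫ x, h x ∂ν ∂μ :=
        setIntegral_le_integral (hg.mul_const _)
          (.of_forall fun a => mul_nonneg (hg0 a) (integral_nonneg hh0))
    _ = (∫ a, g a ∂μ) * ∫ x, h x ∂ν := integral_mul_const _ _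

theorem stmt_14_general (d : ℕ) (ε γ : ℝ) (hγ : 0 < γ)
    (Q : Matrix (Fin (d - 1)) (Fin (d - 1)) ℝ)
    (ν : ℝ × EuclideanSpace ℝ (Fin (d - 1)) → ℂ)
    (hνdecay : ∀ N : ℝ, 0 < N → ∃ C : ℝ, ∀ (t : ℝ) (ξ : EuclideanSpace ℝ (Fin (d - 1))),
      ‖ξ‖ ≤ ε → ‖ν (t, ξ)‖ ≤ C * (1 + |t|) ^ (-N))
    (Efun : EuclideanSpace ℝ (Fin (d - 1)) → ℝ → ℂ)
    (hE : ∀ τ : ℝ, 0 < τ → ∀ x' : EuclideanSpace ℝ (Fin (d - 1)),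
      ‖x'‖ < ε * Real.sqrt τ →
      -(1 / 2) * (∑ p, ∑ q, Q p q * x' p * x' q) + (Efun x' τ).re ≤ -(γ / 4) * ‖x'‖ ^ 2)
    (α β n : ℝ) (hβ0 : 0 < β) :
    (fun x₀ : ℝ =>
      ∫ t in Set.Iic (x₀ ^ α),
        ∫ x' in {x' : EuclideanSpace ℝ (Fin (d - 1)) | x₀ ^ β ≤ ‖x'‖} ∩
            ball (0 : EuclideanSpace ℝ (Fin (d - 1))) (ε * Real.sqrt (x₀ - t)),
          ‖Complex.exp (-(1 / 2 : ℂ) * (∑ p, ∑ q, (Q p q : ℂ) * x' p * x' q) +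
              Efun x' (x₀ - t))‖ *
            ‖ν (t, (Real.sqrt (x₀ - t))⁻¹ • x')‖)
      =O[atTop] fun x₀ : ℝ => x₀ ^ (-n) := by
  obtain ⟨C, hC⟩ := hνdecay 2 two_pos
  set g : ℝ → ℝ := fun t => |C| * (1 + |t|) ^ (-2 : ℝ)
  have hg : Integrable g := by
    simpa only [g, Real.norm_eq_abs] using
      (integrable_one_add_norm (E := ℝ) (μ := volume) (r := 2) (by norm_num)).const_mul |C|
  have hνg : ∀ t ξ, ‖ξ‖ ≤ ε → ‖ν (t, ξ)‖ ≤ g t := fun t ξ hξ =>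
    (hC t ξ hξ).trans (mul_le_mul_of_nonneg_right (le_abs_self C) (by positivity))
  have hc : 0 < γ / 4 / 2 := by positivity
  refine IsBigO.trans ?_ (exp_neg_mul_rpow_sq_isLittleO hc hβ0 (-n)).isBigO
  refine IsBigO.of_bound ((∫ t, g t) *
    ∫ x : EuclideanSpace ℝ (Fin (d - 1)), Real.exp (-(γ / 4 / 2) * ‖x‖ ^ 2)) ?_
  filter_upwards [eventually_ge_atTop 0] with x₀ hx₀
  have hbound := setIntegral_setIntegral_le_integral_mul_integral (s := Set.Iic (x₀ ^ α))
    (fun t => (measurableSet_le measurable_const measurable_norm).inter measurableSet_ball)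
    (fun _ _ => by positivity) (fun _ => by positivity) (fun _ => by positivity) hg
    ((integrable_exp_neg_mul_sq_norm hc).const_mul _) fun t x hx =>
      norm_cexp_mul_norm_le_of_le_norm_of_norm_lt Q Efun (fun ξ => ν (t, ξ)) (by positivity)
        (Real.rpow_nonneg hx₀ β) (hE (x₀ - t)) (hνg t) hx.1 (mem_ball_zero_iff.mp hx.2)
  rw [integral_const_mul (Real.exp (-(γ / 4 / 2) * (x₀ ^ β) ^ 2))] at hbound
  rw [Real.norm_of_nonneg (Real.exp_pos _).le, Real.norm_of_nonneg
    (integral_nonneg fun _ => integral_nonneg fun _ => by positivity)]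
  linarith

/-- truncation in `x'`: for `α ∈ (0,1)`, `β ∈ (0,1/2)` and `n > 0`,
`∫_{-∞}^{x₀^α} ∫_{x₀^β ≤ |x'| < ε√(x₀-t)} |exp(-½x'·Qx' + E(x',x₀-t))| |ν(t,x'/√(x₀-t))| dx' dt
 = O(x₀^{-n})` as `x₀ → +∞`. -/
theorem stmt_14 (d : ℕ) (hd : 2 ≤ d) (ε γ : ℝ) (hε : 0 < ε) (hγ : 0 < γ)
    (Q : Matrix (Fin (d - 1)) (Fin (d - 1)) ℝ) (hQsymm : Q.IsSymm) (hQpos : Q.PosDef)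
    (hgamQ : ∀ v : EuclideanSpace ℝ (Fin (d - 1)),
      γ * ‖v‖ ^ 2 ≤ ∑ p, ∑ q, Q p q * v p * v q)
    (ν : ℝ × EuclideanSpace ℝ (Fin (d - 1)) → ℂ)
    (hν : ContinuousOn ν {q : ℝ × EuclideanSpace ℝ (Fin (d - 1)) | ‖q.2‖ ≤ ε})
    (hνdecay : ∀ N : ℝ, 0 < N → ∃ C : ℝ, ∀ (t : ℝ) (ξ : EuclideanSpace ℝ (Fin (d - 1))),
      ‖ξ‖ ≤ ε → ‖ν (t, ξ)‖ ≤ C * (1 + |t|) ^ (-N))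
    (Efun : EuclideanSpace ℝ (Fin (d - 1)) → ℝ → ℂ)
    (hE : ∀ τ : ℝ, 0 < τ → ∀ x' : EuclideanSpace ℝ (Fin (d - 1)),
      ‖x'‖ < ε * Real.sqrt τ →
      -(1 / 2) * (∑ p, ∑ q, Q p q * x' p * x' q) + (Efun x' τ).re ≤ -(γ / 4) * ‖x'‖ ^ 2)
    (α β n : ℝ) (hα0 : 0 < α) (hα1 : α < 1) (hβ0 : 0 < β) (hβ1 : β < 1 / 2) (hn : 0 < n) :
    (fun x₀ : ℝ =>
      ∫ t in Set.Iic (x₀ ^ α),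
        ∫ x' in {x' : EuclideanSpace ℝ (Fin (d - 1)) | x₀ ^ β ≤ ‖x'‖} ∩
            ball (0 : EuclideanSpace ℝ (Fin (d - 1))) (ε * Real.sqrt (x₀ - t)),
          ‖Complex.exp (-(1 / 2 : ℂ) * (∑ p, ∑ q, (Q p q : ℂ) * x' p * x' q) +
              Efun x' (x₀ - t))‖ *
            ‖ν (t, (Real.sqrt (x₀ - t))⁻¹ • x')‖)
      =O[atTop] fun x₀ : ℝ => x₀ ^ (-n) :=
  stmt_14_general d ε γ hγ Q ν hνdecay Efun hE α β n hβ0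
end

section
/- Let d ≥ 2, let b ∈ ℝ^d be a nonzero vector, and let H be a real symmetric positive definite d×d matrix. For v ∈ ℝ^d write v = v₁ (b/|b|) + v' with v₁ ∈ ℝ and v' ⊥ b. Then there is a constant C > 0 such that | i (b·v) − ½ v·Hv | ≥ C |v₁|^{3/4} |v'|^{1/2} for all v ∈ ℝ^d. Moreover, the function v ↦ |v₁|^{−3/4} |v'|^{−1/2} is integrable over the unit ball of ℝ^d. -/
open Metric MeasureTheory Set
open scoped RealInnerProductSpace

/-!
Write `z = i⟪b, v⟫ - ½ v·Hv`. Its imaginary part is `‖b‖ v₁`, and by coercivity of `H` and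
`‖v'‖ ≤ ‖v‖` its real part has modulus at least `½ μ ‖v'‖²`. The weighted AM–GM inequality
`|Im z|^{3/4} |Re z|^{1/4} ≤ ‖z‖` then gives the lower bound.

For integrability, take an orthonormal basis whose first vector is `b/‖b‖`. In these coordinates
`v₁ = x₁` and `‖v'‖ ≥ |x₂|`, so the integrand is dominated almost everywhere on the unit ball by
`|x₁|^{-3/4} |x₂|^{-1/2}`, a product of integrable one-variable functions on the cube `[-1, 1]^d`.
-/

theorem exists_pos_mul_norm_sq_le_of_homogeneous {E : Type*} [NormedAddCommGroup E]
    [NormedSpace ℝ E] [FiniteDimensional ℝ E] {Q : E → ℝ} (hQ : Continuous Q)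
    (hQ_smul : ∀ (c : ℝ) (v : E), Q (c • v) = c ^ 2 * Q v) (hQ_pos : ∀ v, v ≠ 0 → 0 < Q v) :
    ∃ μ > 0, ∀ v, μ * ‖v‖ ^ 2 ≤ Q v := by
  rcases subsingleton_or_nontrivial E with hE | hE
  · refine ⟨1, one_pos, fun v => ?_⟩
    simpa [Subsingleton.elim v 0] using (hQ_smul 0 0).ge
  obtain ⟨w, hw, hmin⟩ := (isCompact_sphere (0 : E) 1).exists_isMinOn
    (NormedSpace.sphere_nonempty.2 zero_le_one) hQ.continuousOn
  refine ⟨Q w, hQ_pos w (ne_zero_of_mem_unit_sphere ⟨w, hw⟩), fun v => ?_⟩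
  rcases eq_or_ne v 0 with rfl | hv
  · simpa using (hQ_smul 0 0).ge
  have hv' : ‖v‖ ≠ 0 := norm_ne_zero_iff.2 hv
  have hunit : ‖v‖⁻¹ • v ∈ sphere (0 : E) 1 := by
    simp [norm_smul, hv']
  calc Q w * ‖v‖ ^ 2 ≤ Q (‖v‖⁻¹ • v) * ‖v‖ ^ 2 := by gcongr; exact hmin hunit
    _ = Q v := by rw [hQ_smul]; field_simp

theorem Matrix.PosDef.exists_pos_mul_norm_sq_le {ι : Type*} [Fintype ι] {H : Matrix ι ι ℝ}
    (hH : H.PosDef) :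
    ∃ μ > 0, ∀ v : EuclideanSpace ℝ ι, μ * ‖v‖ ^ 2 ≤ ∑ i, ∑ j, H i j * v i * v j := by
  have hQ (v : EuclideanSpace ℝ ι) :
      ∑ i, ∑ j, H i j * v i * v j = dotProduct v.ofLp (H.mulVec v.ofLp) := by
    simp only [dotProduct, Matrix.mulVec, Finset.mul_sum]
    exact Finset.sum_congr rfl fun i _ => Finset.sum_congr rfl fun j _ => by ring
  refine exists_pos_mul_norm_sq_le_of_homogeneous (by fun_prop) (fun c v => ?_) fun v hv => ?_
  · simp only [PiLp.smul_apply, smul_eq_mul, Finset.mul_sum]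
    exact Finset.sum_congr rfl fun i _ => Finset.sum_congr rfl fun j _ => by ring
  · rw [hQ]
    simpa using hH.dotProduct_mulVec_pos (x := v.ofLp) (by simpa using hv)

theorem norm_sub_inner_div_norm_sq_smul_le {E : Type*} [NormedAddCommGroup E]
    [InnerProductSpace ℝ E] (v b : E) : ‖v - (⟪v, b⟫ / ‖b‖ ^ 2) • b‖ ≤ ‖v‖ := by
  have := (ℝ ∙ b)ᗮ.norm_starProjection_apply_le v
  rwa [Submodule.starProjection_orthogonal, sub_apply,
    Submodule.starProjection_singleton, real_inner_comm] at this

theorem Complex.abs_im_rpow_mul_abs_re_rpow_le_norm (z : ℂ) {p q : ℝ} (hp : 0 ≤ p) (hq : 0 ≤ q)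
    (hpq : p + q = 1) : |z.im| ^ p * |z.re| ^ q ≤ ‖z‖ := by
  calc |z.im| ^ p * |z.re| ^ q ≤ p * |z.im| + q * |z.re| :=
        Real.geom_mean_le_arith_mean2_weighted hp hq (abs_nonneg _) (abs_nonneg _) hpq
    _ ≤ p * ‖z‖ + q * ‖z‖ := by gcongr; exacts [abs_im_le_norm z, abs_re_le_norm z]
    _ = ‖z‖ := by rw [← add_mul, hpq, one_mul]

theorem exists_pos_mul_rpow_le_norm_I_mul_inner_sub_half_mul {E : Type*} [NormedAddCommGroup E]
    [InnerProductSpace ℝ E] {b : E} (hb : b ≠ 0) {Q : E → ℝ} {μ : ℝ} (hμ : 0 < μ)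
    (hQ : ∀ v, μ * ‖v‖ ^ 2 ≤ Q v) :
    ∃ C : ℝ, 0 < C ∧ ∀ v : E,
      C * |⟪v, b⟫ / ‖b‖| ^ ((3 : ℝ) / 4) * ‖v - (⟪v, b⟫ / ‖b‖ ^ 2) • b‖ ^ ((1 : ℝ) / 2) ≤
        ‖Complex.I * ((⟪b, v⟫ : ℝ) : ℂ) - (1 / 2 : ℂ) * ((Q v : ℝ) : ℂ)‖ := by
  have hb' : 0 < ‖b‖ := norm_pos_iff.2 hb
  refine ⟨‖b‖ ^ ((3 : ℝ) / 4) * (μ / 2) ^ ((1 : ℝ) / 4), by positivity, fun v => ?_⟩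
  set z : ℂ := Complex.I * ((⟪b, v⟫ : ℝ) : ℂ) - (1 / 2 : ℂ) * ((Q v : ℝ) : ℂ)
  set a := |⟪v, b⟫ / ‖b‖|
  set s := ‖v - (⟪v, b⟫ / ‖b‖ ^ 2) • b‖
  have him : ‖b‖ * a = |z.im| := by
    simp [z, a, abs_div, abs_of_pos hb', real_inner_comm, mul_div_cancel₀ _ hb'.ne']
  have hre : μ / 2 * s ^ 2 ≤ |z.re| := by
    have hs : s ≤ ‖v‖ := norm_sub_inner_div_norm_sq_smul_le v b
    have hQv := hQ v
    have : z.re = -(Q v / 2) := by simp [z]; ring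
    rw [this, abs_neg, abs_of_nonneg (by nlinarith [norm_nonneg v])]
    have : μ * s ^ 2 ≤ μ * ‖v‖ ^ 2 := by gcongr
    linarith
  calc ‖b‖ ^ ((3 : ℝ) / 4) * (μ / 2) ^ ((1 : ℝ) / 4) * a ^ ((3 : ℝ) / 4) * s ^ ((1 : ℝ) / 2)
      = (‖b‖ * a) ^ ((3 : ℝ) / 4) * (μ / 2 * s ^ 2) ^ ((1 : ℝ) / 4) := by
        rw [Real.mul_rpow (by positivity) (by positivity),
          Real.mul_rpow (by positivity) (by positivity), ← Real.rpow_natCast,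
          ← Real.rpow_mul (by positivity)]
        norm_num
        ring
    _ ≤ |z.im| ^ ((3 : ℝ) / 4) * |z.re| ^ ((1 : ℝ) / 4) := by
        rw [him]; gcongr
    _ ≤ ‖z‖ := z.abs_im_rpow_mul_abs_re_rpow_le_norm (by norm_num) (by norm_num) (by norm_num)

theorem integrableOn_Icc_abs_rpow {r : ℝ} (hr : -1 < r) :
    IntegrableOn (fun t : ℝ => |t| ^ r) (Icc (-1) 1) := by
  have hpos : IntervalIntegrable (fun t : ℝ => |t| ^ r) volume 0 1 := by
    refine (intervalIntegral.intervalIntegrable_rpow' hr).congr ?_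
    intro t ht
    rw [uIoc_of_le zero_le_one] at ht
    simp [abs_of_pos ht.1]
  have hneg : IntervalIntegrable (fun t : ℝ => |t| ^ r) volume (-1) 0 := by
    rw [IntervalIntegrable.iff_comp_neg]
    simpa using hpos.symm
  rw [← intervalIntegrable_iff_integrableOn_Icc_of_le (by norm_num)]
  exact hneg.trans hpos

theorem integrableOn_pi_Icc_prod_abs_rpow {ι : Type*} [Fintype ι] {r : ι → ℝ}
    (hr : ∀ i, -1 < r i) :
    IntegrableOn (fun x : ι → ℝ => ∏ i, |x i| ^ r i) (univ.pi fun _ => Icc (-1) 1) := by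
  rw [IntegrableOn, volume_pi, Measure.restrict_pi_pi]
  exact Integrable.fintype_prod fun i => integrableOn_Icc_abs_rpow (hr i)

theorem OrthonormalBasis.integrableOn_ball_prod_abs_repr_rpow {ι E : Type*} [Fintype ι]
    [NormedAddCommGroup E] [InnerProductSpace ℝ E] [FiniteDimensional ℝ E] [MeasurableSpace E]
    [BorelSpace E] (B : OrthonormalBasis ι ℝ E) {r : ι → ℝ} (hr : ∀ i, -1 < r i) :
    IntegrableOn (fun v => ∏ i, |B.repr v i| ^ r i) (ball 0 1) := by
  have hB := (EuclideanSpace.volume_preserving_symm_measurableEquiv_toLp ι).comp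
    B.measurePreserving_measurableEquiv
  have hcube := (hB.integrableOn_comp_preimage ((MeasurableEquiv.measurableEmbedding _).comp
    (MeasurableEquiv.measurableEmbedding _))).2 (integrableOn_pi_Icc_prod_abs_rpow hr)
  refine hcube.mono_set fun v hv i _ => abs_le.1 ?_
  calc |B.repr v i| ≤ ‖B.repr v‖ := by simpa using PiLp.norm_apply_le (B.repr v) i
    _ = ‖v‖ := B.repr.norm_map v
    _ ≤ 1 := (mem_ball_zero_iff.1 hv).le

theorem OrthonormalBasis.integrableOn_ball_abs_repr_rpow_mul_abs_repr_rpow {ι E : Type*}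
    [Fintype ι] [DecidableEq ι] [NormedAddCommGroup E] [InnerProductSpace ℝ E]
    [FiniteDimensional ℝ E] [MeasurableSpace E] [BorelSpace E] (B : OrthonormalBasis ι ℝ E)
    {i j : ι} (hij : i ≠ j) {p q : ℝ} (hp : -1 < p) (hq : -1 < q) :
    IntegrableOn (fun v => |B.repr v i| ^ p * |B.repr v j| ^ q) (ball 0 1) := by
  set r : ι → ℝ := fun k => if k = i then p else if k = j then q else 0
  refine (B.integrableOn_ball_prod_abs_repr_rpow (r := r) fun k => ?_).congr_fun
    (fun v _ => ?_) measurableSet_ball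
  · simp only [r]; split_ifs <;> linarith
  · dsimp only
    rw [Finset.prod_eq_mul i j hij (fun k _ hk => by simp [r, hk.1, hk.2]) (by simp) (by simp)]
    simp [r, hij.symm]

theorem exists_orthonormalBasis_apply_eq {ι E : Type*} [Fintype ι] [NormedAddCommGroup E]
    [InnerProductSpace ℝ E] [FiniteDimensional ℝ E] (hcard : Module.finrank ℝ E = Fintype.card ι)
    {u : E} (hu : ‖u‖ = 1) (i : ι) : ∃ B : OrthonormalBasis ι ℝ E, B i = u := by
  obtain ⟨B, hB⟩ := Orthonormal.exists_orthonormalBasis_extension_of_card_eq hcard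
    (v := fun _ => u) (s := {i}) (by simp [hu])
  exact ⟨B, hB i rfl⟩

theorem OrthonormalBasis.ae_repr_apply_ne_zero {ι E : Type*} [Fintype ι] [NormedAddCommGroup E]
    [InnerProductSpace ℝ E] [FiniteDimensional ℝ E] [MeasurableSpace E] [BorelSpace E]
    (B : OrthonormalBasis ι ℝ E) (i : ι) : ∀ᵐ v : E, B.repr v i ≠ 0 := by
  have hker : {v : E | ¬B.repr v i ≠ 0} = ((ℝ ∙ B i)ᗮ : Submodule ℝ E) := by
    ext v
    simp [Submodule.mem_orthogonal_singleton_iff_inner_right, B.repr_apply_apply]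
  rw [ae_iff, hker]
  refine Measure.addHaar_submodule _ _ fun h => B.orthonormal.ne_zero i ?_
  rwa [Submodule.orthogonal_eq_top_iff, Submodule.span_singleton_eq_bot] at h

theorem abs_inner_le_norm_sub_inner_div_norm_sq_smul {E : Type*} [NormedAddCommGroup E]
    [InnerProductSpace ℝ E] {e b : E} (he : ‖e‖ = 1) (heb : ⟪e, b⟫ = 0) (v : E) :
    |⟪e, v⟫| ≤ ‖v - (⟪v, b⟫ / ‖b‖ ^ 2) • b‖ := by
  have : ⟪e, v⟫ = ⟪e, v - (⟪v, b⟫ / ‖b‖ ^ 2) • b⟫ := by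
    rw [inner_sub_right, real_inner_smul_right, heb, mul_zero, sub_zero]
  rw [this]
  simpa [he] using abs_real_inner_le_norm e (v - (⟪v, b⟫ / ‖b‖ ^ 2) • b)

theorem integrableOn_ball_abs_inner_rpow_mul_norm_sub_rpow {E : Type*} [NormedAddCommGroup E]
    [InnerProductSpace ℝ E] [FiniteDimensional ℝ E] [MeasurableSpace E] [BorelSpace E]
    (hE : 2 ≤ Module.finrank ℝ E) {b : E} (hb : b ≠ 0) {p q : ℝ} (hp : -1 < p) (hq : -1 < q)
    (hq0 : q ≤ 0) :
    IntegrableOn (fun v => |⟪v, b⟫ / ‖b‖| ^ p * ‖v - (⟪v, b⟫ / ‖b‖ ^ 2) • b‖ ^ q)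
      (ball 0 1) := by
  have hb' : ‖b‖ ≠ 0 := norm_ne_zero_iff.2 hb
  let i₀ : Fin (Module.finrank ℝ E) := ⟨0, by omega⟩
  let i₁ : Fin (Module.finrank ℝ E) := ⟨1, by omega⟩
  have hi : i₀ ≠ i₁ := by simp [i₀, i₁, Fin.ext_iff]
  obtain ⟨B, hB⟩ := exists_orthonormalBasis_apply_eq (Fintype.card_fin _).symm
    (u := ‖b‖⁻¹ • b) (by simp [norm_smul, hb']) i₀
  have hcoord₀ (v : E) : ⟪v, b⟫ / ‖b‖ = B.repr v i₀ := by
    rw [B.repr_apply_apply, hB, real_inner_smul_left, real_inner_comm, inv_mul_eq_div]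
  have hcoord₁ (v : E) : |B.repr v i₁| ≤ ‖v - (⟪v, b⟫ / ‖b‖ ^ 2) • b‖ := by
    have horth : ⟪B i₁, b⟫ = 0 := by
      have : ⟪B i₁, B i₀⟫ = 0 := B.orthonormal.2 hi.symm
      rwa [hB, real_inner_smul_right, mul_eq_zero, or_iff_right (inv_ne_zero hb')] at this
    rw [B.repr_apply_apply]
    exact abs_inner_le_norm_sub_inner_div_norm_sq_smul (B.orthonormal.1 i₁) horth v
  have hmeas :
      Measurable fun v : E => |⟪v, b⟫ / ‖b‖| ^ p * ‖v - (⟪v, b⟫ / ‖b‖ ^ 2) • b‖ ^ q := by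
    have h₁ : Continuous fun v : E => |⟪v, b⟫ / ‖b‖| := by fun_prop
    have h₂ : Continuous fun v : E => ‖v - (⟪v, b⟫ / ‖b‖ ^ 2) • b‖ := by fun_prop
    exact (h₁.measurable.pow_const p).mul (h₂.measurable.pow_const q)
  refine (B.integrableOn_ball_abs_repr_rpow_mul_abs_repr_rpow hi hp hq).mono'
    hmeas.aestronglyMeasurable (ae_restrict_of_ae ?_)
  -- off the hyperplane `B.repr v i₁ = 0`, where `0 ^ q = 0` would break the bound
  filter_upwards [B.ae_repr_apply_ne_zero i₁] with v hv
  rw [Real.norm_of_nonneg (by positivity), hcoord₀]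
  exact mul_le_mul_of_nonneg_left
    (Real.rpow_le_rpow_of_nonpos (abs_pos.2 hv) (hcoord₁ v) hq0) (by positivity)

theorem stmt_16_general {d : ℕ} (hd : 2 ≤ d) (b : EuclideanSpace ℝ (Fin d)) (hb : b ≠ 0)
    (H : Matrix (Fin d) (Fin d) ℝ) (hHp : H.PosDef) :
    (∃ C : ℝ, 0 < C ∧ ∀ v : EuclideanSpace ℝ (Fin d),
      C * |⟪v, b⟫ / ‖b‖| ^ ((3 : ℝ) / 4) *
          ‖v - (⟪v, b⟫ / ‖b‖ ^ 2) • b‖ ^ ((1 : ℝ) / 2) ≤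
        ‖Complex.I * ((⟪b, v⟫ : ℝ) : ℂ) -
          (1 / 2 : ℂ) * ((∑ i, ∑ j, H i j * v i * v j : ℝ) : ℂ)‖) ∧
    IntegrableOn
      (fun v : EuclideanSpace ℝ (Fin d) =>
        |⟪v, b⟫ / ‖b‖| ^ (-(3 : ℝ) / 4) * ‖v - (⟪v, b⟫ / ‖b‖ ^ 2) • b‖ ^ (-(1 : ℝ) / 2))
      (ball 0 1) := by
  obtain ⟨μ, hμ, hQ⟩ := hHp.exists_pos_mul_norm_sq_le
  exact ⟨exists_pos_mul_rpow_le_norm_I_mul_inner_sub_half_mul hb hμ hQ,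
    integrableOn_ball_abs_inner_rpow_mul_norm_sub_rpow (by simpa using hd) hb
      (by norm_num) (by norm_num) (by norm_num)⟩

/-- for `b ≠ 0` and `H` symmetric positive definite, writing
`v = v₁ (b/|b|) + v'` with `v' ⊥ b`, one has `|i(b·v) - ½ v·Hv| ≥ C |v₁|^{3/4} |v'|^{1/2}`,
and `|v₁|^{-3/4}|v'|^{-1/2}` is integrable over the unit ball. -/
theorem stmt_16 {d : ℕ} (hd : 2 ≤ d) (b : EuclideanSpace ℝ (Fin d)) (hb : b ≠ 0)
    (H : Matrix (Fin d) (Fin d) ℝ) (hHs : H.IsSymm) (hHp : H.PosDef) :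
    (∃ C : ℝ, 0 < C ∧ ∀ v : EuclideanSpace ℝ (Fin d),
      C * |⟪v, b⟫ / ‖b‖| ^ ((3 : ℝ) / 4) *
          ‖v - (⟪v, b⟫ / ‖b‖ ^ 2) • b‖ ^ ((1 : ℝ) / 2) ≤
        ‖Complex.I * ((⟪b, v⟫ : ℝ) : ℂ) -
          (1 / 2 : ℂ) * ((∑ i, ∑ j, H i j * v i * v j : ℝ) : ℂ)‖) ∧
    IntegrableOn
      (fun v : EuclideanSpace ℝ (Fin d) =>
        |⟪v, b⟫ / ‖b‖| ^ (-(3 : ℝ) / 4) * ‖v - (⟪v, b⟫ / ‖b‖ ^ 2) • b‖ ^ (-(1 : ℝ) / 2))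
      (ball 0 1) :=
  stmt_16_general hd b hb H hHp
end
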